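/- The sum map of a countable family of formal reproducing kernels is a coisometry: let F be a complex Hilbert space, J a countable index set, and for each j ∈ J let (H_j, (π^j_n)_{n ∈ ℤ^d}) be coefficient data of a formal reproducing kernel Hilbert space with coefficient space F. Let (G, (ρ_n)_{n ∈ ℤ^d}) be coefficient data with coefficient space F and with (ρ_n) separating, and assume that for all n, m ∈ ℤ^d the sum Σ_{j ∈ J} π^j_n (π^j_m)^* converges in the weak operator topology to ρ_n ρ_m^*. Then: (i) for every n ∈ ℤ^d and every element f = (f_j)_{j ∈ J} of the Hilbert space direct sum ⊕_{j ∈ J} H_j, the series Σ_{j ∈ J} π^j_n f_j converges in F; (ii) there is a unique bounded linear operator s : ⊕_{j ∈ J} H_j → G such that ρ_n(s f) = Σ_{j ∈ J} π^j_n f_j for all f and all n; (iii) s is a coisometry (s s^* = I_G) whose initial space, i.e. the orthogonal complement of ker s, is the closed linear span of the vectors ((π^j_m)^* u)_{j ∈ J} (m ∈ ℤ^d, u ∈ F), each of which lies in ⊕_{j ∈ J} H_j. -/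

import Mathlib

/-!
By the kernel identity, `ρ_m* u ↦ ((π^j_m)* u)_j` preserves inner products, and since `ρ` is
separating the vectors `ρ_m* u` span a dense subspace of `G`; so this assignment extends to an
isometry `W : G → ⊕_j H_j`. Then `s = W*` is a coisometry, and taking adjoints in
`W ρ_m* = ((π^j_m)*)_j` gives `ρ_n s f = ∑_j π^j_n f_j`, the series converging because it is a
continuous operator applied to `f = ∑_j single j (f j)`.
-/

open ContinuousLinearMap Submodule

section Hilbert

variable {𝕜 E E' X : Type*} [RCLike 𝕜]
  [NormedAddCommGroup E] [InnerProductSpace 𝕜 E] [NormedAddCommGroup E'] [InnerProductSpace 𝕜 E']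

theorem Submodule.mem_orthogonal_span_iff {s : Set E} {g : E} :
    g ∈ (span 𝕜 s)ᗮ ↔ ∀ u ∈ s, inner 𝕜 u g = 0 := by
  refine ⟨fun h u hu => h u (subset_span hu), fun h u hu => ?_⟩
  induction hu using span_induction with
  | mem u hu => exact h u hu
  | zero => exact inner_zero_left g
  | add u u' _ _ hu hu' => rw [inner_add_left, hu, hu', add_zero]
  | smul c u _ hu => rw [inner_smul_left, hu, mul_zero]

theorem mem_orthogonal_span_range_adjoint_iff [CompleteSpace E] [CompleteSpace E']
    {ι : Type*} (T : ι → E →L[𝕜] E') (g : E) :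
    g ∈ (span 𝕜 (Set.range fun p : ι × E' => adjoint (T p.1) p.2))ᗮ ↔ ∀ i, T i g = 0 := by
  simp only [mem_orthogonal_span_iff, Set.forall_mem_range, Prod.forall, adjoint_inner_left]
  exact forall_congr' fun i =>
    ⟨fun h => inner_self_eq_zero.1 (h _), fun h u => by rw [h, inner_zero_right]⟩

theorem ker_eq_orthogonal_span_range_of_comp_eq_adjoint {G ι : Type*} [NormedAddCommGroup G]
    [InnerProductSpace 𝕜 G] [CompleteSpace E] [CompleteSpace E'] [CompleteSpace G]
    {ρ : ι → G →L[𝕜] E'} (hsep : ∀ g, (∀ i, ρ i g = 0) → g = 0) {s : E →L[𝕜] G}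
    {A : ι → E' →L[𝕜] E} (hA : ∀ i, ρ i ∘L s = adjoint (A i)) :
    LinearMap.ker (s : E →ₗ[𝕜] G) = (span 𝕜 (Set.range fun p : ι × E' => A p.1 p.2))ᗮ := by
  ext f
  have h := mem_orthogonal_span_range_adjoint_iff (fun i => adjoint (A i)) f
  simp only [adjoint_adjoint] at h
  rw [LinearMap.mem_ker, ContinuousLinearMap.coe_coe, h]
  simp only [← hA, comp_apply]
  exact ⟨fun h0 i => by rw [h0, map_zero], hsep _⟩

theorem norm_linearCombination_eq_of_inner_eq {v : X → E} {w : X → E'}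
    (h : ∀ x y, inner 𝕜 (w x) (w y) = inner 𝕜 (v x) (v y)) (c : X →₀ 𝕜) :
    ‖Finsupp.linearCombination 𝕜 w c‖ = ‖Finsupp.linearCombination 𝕜 v c‖ := by
  have key : inner 𝕜 (Finsupp.linearCombination 𝕜 w c) (Finsupp.linearCombination 𝕜 w c) =
      inner 𝕜 (Finsupp.linearCombination 𝕜 v c) (Finsupp.linearCombination 𝕜 v c) := by
    simp only [Finsupp.linearCombination_apply, Finsupp.sum_inner, Finsupp.inner_sum,
      inner_smul_left, inner_smul_right, h]
  rw [norm_eq_sqrt_re_inner (𝕜 := 𝕜), norm_eq_sqrt_re_inner (𝕜 := 𝕜), key]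

theorem exists_linearIsometry_apply_eq_of_inner_eq [CompleteSpace E] [CompleteSpace E']
    {v : X → E} {w : X → E'} (hv : (span 𝕜 (Set.range v))ᗮ = ⊥)
    (h : ∀ x y, inner 𝕜 (w x) (w y) = inner 𝕜 (v x) (v y)) :
    ∃ W : E →ₗᵢ[𝕜] E', ∀ x, W (v x) = w x := by
  set α := Finsupp.linearCombination 𝕜 v
  set β := Finsupp.linearCombination 𝕜 w
  have hdense : DenseRange α := by
    rw [DenseRange, ← LinearMap.coe_range, Finsupp.range_linearCombination,
      dense_iff_topologicalClosure_eq_top, ← orthogonal_orthogonal_eq_closure, hv,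
      bot_orthogonal_eq_top]
  have hnorm : ∀ c, ‖β c‖ = ‖α c‖ := norm_linearCombination_eq_of_inner_eq h
  have hβ : ∃ C, ∀ c, ‖β c‖ ≤ C * ‖α c‖ := ⟨1, fun c => (hnorm c).trans_le (one_mul _).ge⟩
  set W := β.extendOfNorm α
  have hWα : ∀ c, W (α c) = β c := LinearMap.extendOfNorm_eq hdense hβ
  refine ⟨⟨W.toLinearMap, fun e => ?_⟩, fun x => ?_⟩
  · refine hdense.induction (fun _ ⟨c, hc⟩ => ?_) (isClosed_eq (by fun_prop) continuous_norm) e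
    rw [← hc, ContinuousLinearMap.coe_coe, hWα, hnorm]
  · simpa [α, β] using hWα (Finsupp.single x 1)

end Hilbert

section Column

variable {𝕜 J F E E' : Type*} [RCLike 𝕜] {H : J → Type*} [∀ j, NormedAddCommGroup (H j)]
  [∀ j, InnerProductSpace 𝕜 (H j)] [∀ j, CompleteSpace (H j)]
  [NormedAddCommGroup F] [InnerProductSpace 𝕜 F] [CompleteSpace F]
  [NormedAddCommGroup E] [NormedSpace 𝕜 E] [NormedAddCommGroup E'] [NormedSpace 𝕜 E']
  {T : ∀ j, H j →L[𝕜] F} {K : F →L[𝕜] E}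

theorem memℓp_adjoint_apply (hT : ∀ u, HasSum (fun j => ‖adjoint (T j) u‖ ^ 2) (‖K u‖ ^ 2))
    (u : F) : Memℓp (fun j => adjoint (T j) u) 2 :=
  memℓp_gen <| by simpa only [ENNReal.toReal_ofNat, Real.rpow_two] using (hT u).summable

theorem norm_lp_mk_adjoint_apply
    (hT : ∀ u, HasSum (fun j => ‖adjoint (T j) u‖ ^ 2) (‖K u‖ ^ 2)) (u : F) :
    ‖(⟨fun j => adjoint (T j) u, memℓp_adjoint_apply hT u⟩ : lp (fun j => H j) 2)‖ = ‖K u‖ := by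
  have h := lp.hasSum_norm (by norm_num)
    (⟨fun j => adjoint (T j) u, memℓp_adjoint_apply hT u⟩ : lp (fun j => H j) 2)
  simp only [ENNReal.toReal_ofNat, Real.rpow_two] at h
  exact (pow_left_inj₀ (norm_nonneg _) (norm_nonneg _) two_ne_zero).1 (h.unique (hT u))

variable (T K) in
noncomputable def lpColumn (hT : ∀ u, HasSum (fun j => ‖adjoint (T j) u‖ ^ 2) (‖K u‖ ^ 2)) :
    F →L[𝕜] lp (fun j => H j) 2 :=
  LinearMap.mkContinuous
    { toFun u := ⟨fun j => adjoint (T j) u, memℓp_adjoint_apply hT u⟩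
      map_add' u u' := lp.ext <| funext fun _ => map_add _ u u'
      map_smul' c u := lp.ext <| funext fun _ => map_smul _ c u }
    ‖K‖ fun u => (norm_lp_mk_adjoint_apply hT u).trans_le (K.le_opNorm u)

variable (hT : ∀ u, HasSum (fun j => ‖adjoint (T j) u‖ ^ 2) (‖K u‖ ^ 2))

@[simp]
theorem lpColumn_apply (u : F) (j : J) : lpColumn T K hT u j = adjoint (T j) u := rfl

theorem hasSum_adjoint_lpColumn (f : lp (fun j => H j) 2) :
    HasSum (fun j => T j (f j)) (adjoint (lpColumn T K hT) f) := by
  classical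
  have hsingle : ∀ j x, adjoint (lpColumn T K hT) (lp.single 2 j x) = T j x := fun j x =>
    ext_inner_right 𝕜 fun u => by
      rw [adjoint_inner_left, lp.inner_single_left, lpColumn_apply, adjoint_inner_right]
  simpa only [hsingle] using
    (lp.hasSum_single ENNReal.ofNat_ne_top f).mapL (adjoint (lpColumn T K hT))

theorem hasSum_inner_lpColumn {T T' : ∀ j, H j →L[𝕜] F} {K : F →L[𝕜] E} {K' : F →L[𝕜] E'}
    (hT : ∀ u, HasSum (fun j => ‖adjoint (T j) u‖ ^ 2) (‖K u‖ ^ 2))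
    (hT' : ∀ u, HasSum (fun j => ‖adjoint (T' j) u‖ ^ 2) (‖K' u‖ ^ 2)) (u u' : F) :
    HasSum (fun j => inner 𝕜 (T' j (adjoint (T j) u)) u')
      (inner 𝕜 (lpColumn T K hT u) (lpColumn T' K' hT' u')) := by
  simpa only [lpColumn_apply, adjoint_inner_right] using
    lp.hasSum_inner (𝕜 := 𝕜) (lpColumn T K hT u) (lpColumn T' K' hT' u')

theorem hasSum_norm_sq_adjoint_of_hasSum_inner {G : Type*} [NormedAddCommGroup G]
    [InnerProductSpace 𝕜 G] [CompleteSpace G] {T : ∀ j, H j →L[𝕜] F} {R : G →L[𝕜] F} {u : F}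
    (h : HasSum (fun j => inner 𝕜 (T j (adjoint (T j) u)) u) (inner 𝕜 (R (adjoint R u)) u)) :
    HasSum (fun j => ‖adjoint (T j) u‖ ^ 2) (‖adjoint R u‖ ^ 2) := by
  simp only [← adjoint_inner_right, inner_self_eq_norm_sq_to_K] at h
  exact_mod_cast h

end Column

theorem sum_map_coisometry
    {d : ℕ} {F : Type*} [NormedAddCommGroup F] [InnerProductSpace ℂ F] [CompleteSpace F]
    {J : Type*}
    (H : J → Type*) [∀ j, NormedAddCommGroup (H j)] [∀ j, InnerProductSpace ℂ (H j)]
    [∀ j, CompleteSpace (H j)]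
    {G : Type*} [NormedAddCommGroup G] [InnerProductSpace ℂ G] [CompleteSpace G]
    (π : ∀ j, (Fin d → ℤ) → H j →L[ℂ] F)
    (ρ : (Fin d → ℤ) → G →L[ℂ] F)
    (hsep : ∀ g : G, (∀ n, ρ n g = 0) → g = 0)
    (hker : ∀ (n m : Fin d → ℤ) (x y : F),
      HasSum (fun j => (inner ℂ (π j n (adjoint (π j m) x)) y : ℂ))
        (inner ℂ (ρ n (adjoint (ρ m) x)) y : ℂ)) :
    (∀ (n : Fin d → ℤ) (f : lp (fun j => H j) 2), Summable fun j => π j n (f j)) ∧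
    ∃ s : lp (fun j => H j) 2 →L[ℂ] G,
      (∀ (f : lp (fun j => H j) 2) (n : Fin d → ℤ), ρ n (s f) = ∑' j, π j n (f j)) ∧
      (∀ s' : lp (fun j => H j) 2 →L[ℂ] G,
        (∀ (f : lp (fun j => H j) 2) (n : Fin d → ℤ), ρ n (s' f) = ∑' j, π j n (f j)) →
        s' = s) ∧
      s ∘L adjoint s = 1 ∧
      (∀ (m : Fin d → ℤ) (u : F), Memℓp (fun j => adjoint (π j m) u) 2) ∧
      (LinearMap.ker (s : lp (fun j => H j) 2 →ₗ[ℂ] G))ᗮ =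
        (Submodule.span ℂ
          {g : lp (fun j => H j) 2 | ∃ m u, ∀ j, g j = adjoint (π j m) u}).topologicalClosure := by
  have hdiag m u : HasSum (fun j => ‖adjoint (π j m) u‖ ^ 2) (‖adjoint (ρ m) u‖ ^ 2) :=
    hasSum_norm_sq_adjoint_of_hasSum_inner (hker m m u u)
  set A := fun m => lpColumn (fun j => π j m) (adjoint (ρ m)) (hdiag m)
  obtain ⟨W, hW⟩ := exists_linearIsometry_apply_eq_of_inner_eq
    (v := fun p : (Fin d → ℤ) × F => adjoint (ρ p.1) p.2) (w := fun p => A p.1 p.2)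
    (eq_bot_iff.2 fun g hg => hsep g ((mem_orthogonal_span_range_adjoint_iff ρ g).1 hg))
    (fun p q => ((hasSum_inner_lpColumn (hdiag p.1) (hdiag q.1) p.2 q.2).unique
      (hker q.1 p.1 p.2 q.2)).trans (adjoint_inner_right _ _ _).symm)
  have hρs n : ρ n ∘L adjoint W.toContinuousLinearMap = adjoint (A n) := by
    rw [← show W.toContinuousLinearMap ∘L adjoint (ρ n) = A n from ext fun u => hW (n, u),
      adjoint_comp, adjoint_adjoint]
  have hs f n : ρ n (adjoint W.toContinuousLinearMap f) = ∑' j, π j n (f j) := by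
    rw [← comp_apply, hρs, (hasSum_adjoint_lpColumn (hdiag n) f).tsum_eq]
  refine ⟨fun n f => (hasSum_adjoint_lpColumn (hdiag n) f).summable, _, hs, fun s' hs' => ?_, ?_,
    fun m => memℓp_adjoint_apply (hdiag m), ?_⟩
  · ext f
    exact sub_eq_zero.1 (hsep _ fun n => by rw [map_sub, hs, hs', sub_self])
  · rw [adjoint_adjoint]
    exact W.adjoint_comp_self
  · rw [ker_eq_orthogonal_span_range_of_comp_eq_adjoint hsep hρs, orthogonal_orthogonal_eq_closure]
    congr
    ext g
    simp [A, lp.ext_iff, funext_iff, eq_comm]
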